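/- arXiv:2310.18423 — 7 statements merged into one kernel-verified Lean document; each statement's English description precedes it below -/
import Mathlib

section
/- For every n ∈ ℕ and every real number s, ∫₀^∞ h_{2n}(v) v^{1/2 - i s} (dv/v) = (-1)^n 𝒫_n(s) · ∫₀^∞ h₀(v) v^{1/2 - i s} (dv/v), where h₀(x) = 2^{1/4} e^{-π x²}. -/
open MeasureTheory Complex Finset

/-- The normalized even Hermite function `h_{2n}`. -/
noncomputable def h2 (n : ℕ) (x : ℝ) : ℝ :=
  ∑ k ∈ Finset.range (n + 1),
    (-1 : ℝ) ^ (n - k) * (2 : ℝ) ^ ((3 * (k : ℝ)) - n + 1 / 4) *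
      Real.sqrt ((2 * n).factorial) / ((2 * k).factorial * (n - k).factorial) *
      Real.pi ^ k * x ^ (2 * k) * Real.exp (-Real.pi * x ^ 2)

/-- `h₀(x) = 2^{1/4} e^{-π x²}`. -/
noncomputable def h0 (x : ℝ) : ℝ := (2 : ℝ) ^ ((1 : ℝ) / 4) * Real.exp (-Real.pi * x ^ 2)

/-- The polynomials `𝒫_m` as functions on `ℂ`. -/
noncomputable def Pc (m : ℕ) (x : ℂ) : ℂ :=
  (Real.sqrt ((2 * m).factorial) : ℂ) *
    ∑ k ∈ Finset.range (m + 1),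
      (-1 : ℂ) ^ k * (2 : ℂ) ^ (3 * (k : ℤ) - (m : ℤ)) *
        (∏ j ∈ Finset.range k, ((j : ℂ) - Complex.I * x / 2 + 1 / 4)) /
        (((2 * k).factorial : ℂ) * ((m - k).factorial : ℂ))

/-! Expanding `h_{2n}` in the Gaussian moments `π^k x^{2k} e^{-πx²}`, each moment has Mellin
transform `Γℝ(c + 2k) / 2 = Γℝ(c) / 2 · ∏_{j<k} (c/2 + j) / π^k`, by the functional equation
`Γℝ(c + 2) = Γℝ(c) · c / (2π)`. Hence the Mellin transform of `h_{2n}` is that of `h₀` times a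
polynomial in `c` whose coefficients are those of `h_{2n}`; at `c = 1/2 - is` one has
`c/2 + j = j - is/2 + 1/4`, and this polynomial is `(-1)^n 𝒫_n(s)`. -/

section HasMellin

variable {E : Type*} [NormedAddCommGroup E] [NormedSpace ℂ E]

theorem HasMellin.const_smul {f : ℝ → E} {s : ℂ} {m : E} (hf : HasMellin f s m)
    {R : Type*} [NormedRing R] [Module R E] [IsBoundedSMul R E] [SMulCommClass ℂ R E] (c : R) :
    HasMellin (fun t => c • f t) s (c • m) :=
  hf.2 ▸ hasMellin_const_smul hf.1 c

theorem HasMellin.sum {ι : Type*} (u : Finset ι) {f : ι → ℝ → E} {s : ℂ} {m : ι → E}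
    (hf : ∀ i ∈ u, HasMellin (f i) s (m i)) :
    HasMellin (fun t => ∑ i ∈ u, f i t) s (∑ i ∈ u, m i) := by
  have hconv (i) (hi : i ∈ u) :
      IntegrableOn (fun t : ℝ => (t : ℂ) ^ (s - 1) • f i t) (Set.Ioi 0) :=
    (hf i hi).1
  refine ⟨?_, ?_⟩
  · simpa only [MellinConvergent, IntegrableOn, Finset.smul_sum] using integrable_finsetSum u hconv
  · simp only [mellin, Finset.smul_sum]
    rw [integral_finsetSum u hconv]
    exact Finset.sum_congr rfl fun i hi => (hf i hi).2

end HasMellin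

theorem integral_mul_cpow_div_eq_mellin (f : ℝ → ℂ) (s : ℂ) :
    ∫ v in Set.Ioi (0 : ℝ), f v * (v : ℂ) ^ s / v = mellin f s := by
  refine setIntegral_congr_fun measurableSet_Ioi fun v hv => ?_
  rw [smul_eq_mul, cpow_sub _ _ (ofReal_ne_zero.2 (ne_of_gt hv)), cpow_one]
  ring

theorem mellinConvergent_gaussian {s : ℂ} (hs : 0 < s.re) :
    MellinConvergent (fun t : ℝ => (Real.exp (-Real.pi * t ^ 2) : ℂ)) s := by
  simp only [MellinConvergent, smul_eq_mul]
  refine Integrable.mono' (g := fun t : ℝ => t ^ (s.re - 1) * Real.exp (-Real.pi * t ^ 2))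
    (integrableOn_rpow_mul_exp_neg_mul_sq Real.pi_pos (by linarith)) ?_ ?_
  · refine (ContinuousOn.mul (fun t ht => ?_) ?_).aestronglyMeasurable measurableSet_Ioi
    · exact (continuousAt_ofReal_cpow_const _ _ (Or.inr (ne_of_gt ht))).continuousWithinAt
    · exact Continuous.continuousOn (by fun_prop)
  · filter_upwards [ae_restrict_mem measurableSet_Ioi] with t ht
    rw [norm_mul, Complex.norm_real, Real.norm_eq_abs, norm_cpow_eq_rpow_re_of_pos ht,
      Real.abs_exp, sub_re, one_re]

theorem mellin_exp_neg_pi_mul {s : ℂ} (hs : 0 < s.re) :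
    mellin (fun t : ℝ => (Real.exp (-Real.pi * t) : ℂ)) s = (Real.pi : ℂ) ^ (-s) * Gamma s := by
  have hpi : (Real.pi : ℂ).arg ≠ Real.pi := by
    rw [arg_ofReal_of_nonneg Real.pi_pos.le]; exact Real.pi_ne_zero.symm
  calc mellin (fun t : ℝ => (Real.exp (-Real.pi * t) : ℂ)) s
      = ∫ t : ℝ in Set.Ioi 0, (t : ℂ) ^ (s - 1) * cexp (-(Real.pi * t)) := by
        simp [mellin]
    _ = (Real.pi : ℂ) ^ (-s) * Gamma s := by
        rw [integral_cpow_mul_exp_neg_mul_Ioi hs Real.pi_pos, one_div, inv_cpow _ _ hpi, cpow_neg]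

theorem mellin_gaussian {s : ℂ} (hs : 0 < s.re) :
    mellin (fun t : ℝ => (Real.exp (-Real.pi * t ^ 2) : ℂ)) s = Gammaℝ s / 2 := by
  have hsq := mellin_comp_rpow (fun u : ℝ => (Real.exp (-Real.pi * u) : ℂ)) s 2
  simp only [Real.rpow_two] at hsq
  rw [hsq, mellin_exp_neg_pi_mul (by simpa using hs), Gammaℝ_def]
  simp [div_eq_inv_mul]

theorem hasMellin_pow_mul_gaussian (k : ℕ) {s : ℂ} (hs : 0 < s.re) :
    HasMellin (fun t : ℝ => ((t ^ (2 * k) * Real.exp (-Real.pi * t ^ 2) : ℝ) : ℂ)) s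
      (Gammaℝ (s + 2 * k) / 2) := by
  have hpow : (fun t : ℝ => ((t ^ (2 * k) * Real.exp (-Real.pi * t ^ 2) : ℝ) : ℂ))
      = fun t : ℝ => (t : ℂ) ^ ((2 * k : ℕ) : ℂ) • (Real.exp (-Real.pi * t ^ 2) : ℂ) := by
    ext t; rw [smul_eq_mul, cpow_natCast]; push_cast; rfl
  have hs' : 0 < (s + (2 * k : ℕ)).re := by
    simp only [Nat.cast_mul, Nat.cast_ofNat, add_re, mul_re, re_ofNat, natCast_re, im_ofNat,
      natCast_im, mul_zero, sub_zero]
    positivity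
  rw [hpow]
  exact ⟨MellinConvergent.cpow_smul.2 (mellinConvergent_gaussian hs'),
    by rw [mellin_cpow_smul, mellin_gaussian hs']; push_cast; rfl⟩

theorem Gammaℝ_add_two_mul_nat {s : ℂ} (hs : ∀ j : ℕ, s ≠ -(2 * j)) (k : ℕ) :
    Gammaℝ (s + 2 * k) * (Real.pi : ℂ) ^ k = Gammaℝ s * ∏ j ∈ range k, (s / 2 + j) := by
  induction k with
  | zero => simp
  | succ k ih =>
    have hne : s + 2 * k ≠ 0 := fun h => hs k (eq_neg_of_add_eq_zero_left h)
    rw [Nat.cast_succ, mul_add_one, ← add_assoc, Gammaℝ_add_two hne, prod_range_succ, ← mul_assoc,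
      ← ih]
    field_simp
    ring

theorem neg_one_pow_sub_of_le {R : Type*} [Monoid R] [HasDistribNeg R] {n k : ℕ} (hk : k ≤ n) :
    (-1 : R) ^ (n - k) = (-1) ^ n * (-1) ^ k := by
  conv_rhs => rw [← Nat.sub_add_cancel hk, pow_add, mul_assoc, ← pow_add, ← two_mul, pow_mul]
  simp

noncomputable def evenHermiteCoeff (n k : ℕ) : ℝ :=
  √((2 * n).factorial) * (-1) ^ k * 2 ^ (3 * (k : ℤ) - n) / ((2 * k).factorial * (n - k).factorial)

theorem h2_eq_sum (n : ℕ) (t : ℝ) :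
    h2 n t = ∑ k ∈ range (n + 1), 2 ^ (1 / 4 : ℝ) * (-1) ^ n * evenHermiteCoeff n k *
      (Real.pi ^ k * t ^ (2 * k) * Real.exp (-Real.pi * t ^ 2)) := by
  refine sum_congr rfl fun k hk => ?_
  have h2pow : (2 : ℝ) ^ ((3 * (k : ℝ)) - n + 1 / 4) = 2 ^ (3 * (k : ℤ) - n) * 2 ^ (1 / 4 : ℝ) := by
    rw [← Real.rpow_intCast, ← Real.rpow_add two_pos]
    push_cast; ring_nf
  rw [neg_one_pow_sub_of_le (Nat.lt_succ_iff.mp (mem_range.mp hk)), h2pow, evenHermiteCoeff]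
  ring

theorem Pc_eq_sum (m : ℕ) (x : ℂ) :
    Pc m x = ∑ k ∈ range (m + 1),
      (evenHermiteCoeff m k : ℂ) * ∏ j ∈ range k, ((1 / 2 - I * x) / 2 + j) := by
  rw [Pc, mul_sum]
  refine sum_congr rfl fun k _ => ?_
  have hprod : ∏ j ∈ range k, ((1 / 2 - I * x) / 2 + j)
      = ∏ j ∈ range k, ((j : ℂ) - I * x / 2 + 1 / 4) :=
    prod_congr rfl fun j _ => by ring
  rw [hprod, evenHermiteCoeff]
  push_cast
  ring

theorem hasMellin_pi_pow_mul_pow_mul_gaussian (k : ℕ) {s : ℂ} (hs : 0 < s.re) :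
    HasMellin (fun t : ℝ => ((Real.pi ^ k * t ^ (2 * k) * Real.exp (-Real.pi * t ^ 2) : ℝ) : ℂ)) s
      (Gammaℝ s / 2 * ∏ j ∈ range k, (s / 2 + j)) := by
  have h := (hasMellin_pow_mul_gaussian k hs).const_smul ((Real.pi : ℂ) ^ k)
  simp only [smul_eq_mul, ← ofReal_pow, ← ofReal_mul, ← mul_assoc] at h
  have hs' (j : ℕ) : s ≠ -(2 * j) := by
    rintro rfl
    simp only [neg_re, mul_re, re_ofNat, natCast_re, im_ofNat, natCast_im, mul_zero, sub_zero,
      Left.neg_pos_iff] at hs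
    exact (by positivity : (0 : ℝ) ≤ 2 * j).not_gt hs
  convert h using 1
  push_cast
  linear_combination (-1 / 2 : ℂ) * Gammaℝ_add_two_mul_nat hs' k

theorem mellin_h2 (n : ℕ) {s : ℂ} (hs : 0 < s.re) :
    mellin (fun t => (h2 n t : ℂ)) s = (2 ^ (1 / 4 : ℝ) : ℝ) * (-1) ^ n * (Gammaℝ s / 2) *
      ∑ k ∈ range (n + 1), (evenHermiteCoeff n k : ℂ) * ∏ j ∈ range k, (s / 2 + j) := by
  have hsum : (fun t => (h2 n t : ℂ)) = fun t => ∑ k ∈ range (n + 1),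
      ((2 ^ (1 / 4 : ℝ) * (-1) ^ n * evenHermiteCoeff n k : ℝ) : ℂ) •
        ((Real.pi ^ k * t ^ (2 * k) * Real.exp (-Real.pi * t ^ 2) : ℝ) : ℂ) := by
    ext t
    simp only [h2_eq_sum, ofReal_sum, ofReal_mul, smul_eq_mul]
  rw [hsum, (HasMellin.sum _ fun k _ =>
    (hasMellin_pi_pow_mul_pow_mul_gaussian k hs).const_smul _).2, mul_sum]
  refine sum_congr rfl fun k _ => ?_
  push_cast
  ring

theorem mellin_h0 {s : ℂ} (hs : 0 < s.re) :
    mellin (fun t => (h0 t : ℂ)) s = (2 ^ (1 / 4 : ℝ) : ℝ) * (Gammaℝ s / 2) := by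
  have h := mellin_const_smul (fun t : ℝ => (Real.exp (-Real.pi * t ^ 2) : ℂ)) s
    (((2 : ℝ) ^ (1 / 4 : ℝ) : ℝ) : ℂ)
  simpa only [mellin_gaussian hs, smul_eq_mul, h0, ofReal_mul] using h

/-- `∫₀^∞ h_{2n}(v) v^{1/2-is} dv/v = (-1)^n 𝒫_n(s) ∫₀^∞ h₀(v) v^{1/2-is} dv/v`. -/
theorem stmt1 (n : ℕ) (s : ℝ) :
    (∫ v in Set.Ioi (0 : ℝ),
        ((h2 n v : ℝ) : ℂ) * (v : ℂ) ^ ((1 : ℂ) / 2 - Complex.I * (s : ℂ)) / (v : ℂ))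
      = (-1 : ℂ) ^ n * Pc n (s : ℂ) *
          ∫ v in Set.Ioi (0 : ℝ),
            ((h0 v : ℝ) : ℂ) * (v : ℂ) ^ ((1 : ℂ) / 2 - Complex.I * (s : ℂ)) / (v : ℂ) := by
  have hs : 0 < (1 / 2 - I * s : ℂ).re := by simp
  rw [integral_mul_cpow_div_eq_mellin, integral_mul_cpow_div_eq_mellin, mellin_h2 n hs,
    mellin_h0 hs, Pc_eq_sum]
  ring
end

section
/- For every n ∈ ℕ and every x ∈ ℝ, the normalized even Hermite function satisfies -h_{2n}''(x) + (2π x)² h_{2n}(x) = 2π(4n+1) · h_{2n}(x); that is, h_{2n} is an eigenfunction of the Hermite operator H = -∂² + (2π q)² with eigenvalue 2π(4n+1). -/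
/-!
Writing `h_{2n}(x) = p(x) e^{-πx²}` with the even polynomial `p = ∑ c_k x^{2k}`, the Hermite
operator becomes `(-p'' + 4πx p' + 2πp) e^{-πx²}`. The Euler operator `x p'` multiplies `c_k x^{2k}`
by `2k`, and the coefficients satisfy `(2k+2)(2k+1) c_{k+1} = 8π(k-n) c_k`, so that
`p'' = ∑ 8π(k-n) c_k x^{2k}`; the `k`-dependence cancels and leaves `2π(4n+1) p`.
-/

open Finset

noncomputable def h2Coeff (n k : ℕ) : ℝ :=
  (-1 : ℝ) ^ (n - k) * (2 : ℝ) ^ ((3 * (k : ℝ)) - n + 1 / 4) *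
    Real.sqrt ((2 * n).factorial) / ((2 * k).factorial * (n - k).factorial) *
    Real.pi ^ k

noncomputable def h2Poly (n : ℕ) (x : ℝ) : ℝ :=
  ∑ k ∈ range (n + 1), h2Coeff n k * x ^ (2 * k)

lemma h2_eq_h2Poly_mul (n : ℕ) : h2 n = fun x => h2Poly n x * Real.exp (-Real.pi * x ^ 2) := by
  funext x
  simp only [h2, h2Poly, h2Coeff, sum_mul]

section GaussianFactor

variable {f f' : ℝ → ℝ} (c : ℝ)

lemma HasDerivAt.mul_gaussian {g' x : ℝ} (hf : HasDerivAt f g' x) :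
    HasDerivAt (fun y => f y * Real.exp (-c * y ^ 2))
      ((g' - 2 * c * x * f x) * Real.exp (-c * x ^ 2)) x := by
  have hq : HasDerivAt (fun y => -c * y ^ 2) (-(2 * c * x)) x :=
    ((hasDerivAt_pow 2 x).const_mul (-c)).congr_deriv (by push_cast; ring)
  exact (hf.mul hq.exp).congr_deriv (by ring)

lemma hermite_mul_gaussian (hf : ∀ y, HasDerivAt f (f' y) y) {f'' x : ℝ}
    (hf' : HasDerivAt f' f'' x) :
    -deriv (deriv fun y => f y * Real.exp (-c * y ^ 2)) x
        + (2 * c * x) ^ 2 * (f x * Real.exp (-c * x ^ 2))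
      = (-f'' + 4 * c * (x * f' x) + 2 * c * f x) * Real.exp (-c * x ^ 2) := by
  have hd : deriv (fun y => f y * Real.exp (-c * y ^ 2))
      = fun y => (f' y - 2 * c * y * f y) * Real.exp (-c * y ^ 2) :=
    funext fun y => ((hf y).mul_gaussian c).deriv
  have hg : HasDerivAt (fun y => f' y - 2 * c * y * f y)
      (f'' - (2 * c * 1 * f x + 2 * c * x * f' x)) x :=
    hf'.sub (((hasDerivAt_id' x).const_mul (2 * c)).mul (hf x))
  rw [hd, (hg.mul_gaussian c).deriv]
  ring

end GaussianFactor

lemma hasDerivAt_sum_mul_pow_two_mul (a : ℕ → ℝ) (N : ℕ) (x : ℝ) :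
    HasDerivAt (fun y => ∑ k ∈ range (N + 1), a k * y ^ (2 * k))
      (∑ k ∈ range N, a (k + 1) * (2 * k + 2) * x ^ (2 * k + 1)) x := by
  simp_rw [sum_range_succ' _ N, mul_zero, pow_zero, mul_one]
  refine (HasDerivAt.fun_sum fun k _ => ?_).add_const _
  refine ((hasDerivAt_pow (2 * (k + 1)) x).const_mul (a (k + 1))).congr_deriv ?_
  rw [show 2 * (k + 1) - 1 = 2 * k + 1 by omega]
  push_cast
  ring

lemma hasDerivAt_sum_mul_pow_two_mul_add_one (b : ℕ → ℝ) (N : ℕ) (x : ℝ) :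
    HasDerivAt (fun y => ∑ k ∈ range N, b k * y ^ (2 * k + 1))
      (∑ k ∈ range N, b k * (2 * k + 1) * x ^ (2 * k)) x := by
  refine HasDerivAt.fun_sum fun k _ => ?_
  refine ((hasDerivAt_pow (2 * k + 1) x).const_mul (b k)).congr_deriv ?_
  rw [Nat.add_sub_cancel]
  push_cast
  ring

lemma mul_sum_mul_pow_two_mul_add_one (a : ℕ → ℝ) (N : ℕ) (x : ℝ) :
    x * ∑ k ∈ range N, a (k + 1) * (2 * k + 2) * x ^ (2 * k + 1)
      = ∑ k ∈ range (N + 1), 2 * k * a k * x ^ (2 * k) := by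
  rw [sum_range_succ', mul_sum]
  simp only [CharP.cast_eq_zero, mul_zero, zero_mul, add_zero]
  refine sum_congr rfl fun k _ => ?_
  push_cast
  ring

lemma h2Coeff_succ (n k : ℕ) (hk : k < n) :
    h2Coeff n (k + 1) * ((2 * k + 2) * (2 * k + 1)) = 8 * Real.pi * (k - n) * h2Coeff n k := by
  obtain ⟨m, rfl⟩ : ∃ m, n = k + (m + 1) := ⟨n - k - 1, by omega⟩
  have hpow : (2 : ℝ) ^ ((3 * ((k + 1 : ℕ) : ℝ)) - (k + (m + 1) : ℕ) + 1 / 4)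
      = 2 ^ ((3 * (k : ℝ)) - (k + (m + 1) : ℕ) + 1 / 4) * 2 ^ 3 := by
    rw [← Real.rpow_add_natCast two_ne_zero]
    push_cast
    ring_nf
  have hfac : ((2 * (k + 1)).factorial : ℝ) = (2 * k + 2) * (2 * k + 1) * (2 * k).factorial := by
    rw [show 2 * (k + 1) = 2 * k + 1 + 1 by ring, Nat.factorial_succ, Nat.factorial_succ]
    push_cast
    ring
  simp only [h2Coeff, hpow, hfac, show k + (m + 1) - (k + 1) = m by omega,
    show k + (m + 1) - k = m + 1 by omega, Nat.factorial_succ m, pow_succ]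
  push_cast
  field_simp
  ring

lemma sum_h2Coeff_second_deriv (n : ℕ) (x : ℝ) :
    ∑ k ∈ range n, h2Coeff n (k + 1) * (2 * k + 2) * (2 * k + 1) * x ^ (2 * k)
      = ∑ k ∈ range (n + 1), 8 * Real.pi * (k - n) * h2Coeff n k * x ^ (2 * k) := by
  rw [sum_range_succ _ n, sub_self, mul_zero, zero_mul, zero_mul, add_zero]
  refine sum_congr rfl fun k hk => ?_
  linear_combination x ^ (2 * k) * h2Coeff_succ n k (mem_range.mp hk)

/-- `h_{2n}` is an eigenfunction of the Hermite operator `-∂² + (2πq)²`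
with eigenvalue `2π(4n+1)`. -/
theorem stmt4 (n : ℕ) (x : ℝ) :
    -(deriv (deriv (h2 n)) x) + (2 * Real.pi * x) ^ 2 * h2 n x
      = 2 * Real.pi * (4 * (n : ℝ) + 1) * h2 n x := by
  have hp := hasDerivAt_sum_mul_pow_two_mul (h2Coeff n) n
  have hp' := hasDerivAt_sum_mul_pow_two_mul_add_one (fun k => h2Coeff n (k + 1) * (2 * k + 2)) n x
  rw [h2_eq_h2Poly_mul]
  simp only [h2Poly]
  rw [hermite_mul_gaussian Real.pi hp hp', mul_sum_mul_pow_two_mul_add_one,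
    sum_h2Coeff_second_deriv]
  simp only [mul_sum, ← sum_neg_distrib, ← sum_add_distrib, sum_mul]
  refine sum_congr rfl fun k _ => ?_
  ring
end

section
/- For every n ∈ ℕ, ∫_ℝ ( x · h_{2n}'(x) + (1/2) h_{2n}(x) ) · h_{2n+2}(x) dx = -(1/2)√((2n+1)(2n+2)); that is, the matrix element ⟨(H + 1/2) h_{2n}, h_{2n+2}⟩ in L²(ℝ) of the operator H + 1/2 with H = x ∂_x equals -(1/2)√((2n+1)(2n+2)). -/
open MeasureTheory Finset

/-!
With `ψ_m(x) = 2^{1/4} (m!)^{-1/2} He_m(2√π x) e^{-πx²}` one has `h_{2n} = ψ_{2n}` (compare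
coefficients), and the recurrences of `He_m` give the ladder relations
`2√π x ψ_m = √m ψ_{m-1} + √(m+1) ψ_{m+1}` and `ψ_m' = √π (√m ψ_{m-1} - √(m+1) ψ_{m+1})`.
Since `(ψ_m ψ_p)'` integrates to zero, they give `√m ⟨ψ_{m-1}, ψ_p⟩ = √(p+1) ⟨ψ_m, ψ_{p+1}⟩`,
so the `ψ_m` are orthonormal by induction from the Gaussian integral `⟨ψ_0, ψ_0⟩ = 1`.
Combining the two relations,
`x ψ_m' + ψ_m / 2 = (√(m(m-1)) ψ_{m-2} - √((m+1)(m+2)) ψ_{m+2}) / 2`,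
and pairing with `ψ_{m+2}` leaves `-(1/2) √((m+1)(m+2))`.
-/

open Real Polynomial
open scoped Nat

theorem Finset.sum_range_two_mul_add_one_of_odd_eq_zero {M : Type*} [AddCommMonoid M] (f : ℕ → M)
    (hf : ∀ k, f (2 * k + 1) = 0) (n : ℕ) :
    ∑ i ∈ range (2 * n + 1), f i = ∑ k ∈ range (n + 1), f (2 * k) := by
  induction n with
  | zero => simp
  | succ n ih =>
    rw [show 2 * (n + 1) + 1 = 2 * n + 1 + 1 + 1 by ring, sum_range_succ, sum_range_succ, ih,
      hf, add_zero, sum_range_succ (n := n + 1)]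
    rfl

theorem Nat.factorial_two_mul_eq (n : ℕ) : (2 * n)! = 2 ^ n * n ! * (2 * n - 1)‼ := by
  rcases n with _ | n
  · rfl
  · rw [show 2 * (n + 1) = 2 * n + 1 + 1 by ring, Nat.factorial_eq_mul_doubleFactorial,
      show 2 * n + 1 + 1 = 2 * (n + 1) by ring, Nat.doubleFactorial_two_mul]
    rfl

namespace Polynomial

theorem derivative_hermite (n : ℕ) : derivative (hermite n) = n * hermite (n - 1) := by
  induction n with
  | zero => simp
  | succ n ih =>
    rw [hermite_succ, derivative_sub, derivative_mul, derivative_X, ih, derivative_mul,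
      derivative_natCast]
    rcases n with _ | n
    · simp
    · simp only [Nat.add_sub_cancel, hermite_succ n]
      push_cast
      ring

theorem X_mul_hermite (n : ℕ) :
    X * hermite n = hermite (n + 1) + (n : ℤ[X]) * hermite (n - 1) := by
  rw [hermite_succ, derivative_hermite]
  ring

theorem aeval_hermite_two_mul {R : Type*} [CommRing R] (n : ℕ) (x : R) :
    aeval x (hermite (2 * n)) =
      ∑ k ∈ range (n + 1), (hermite (2 * n)).coeff (2 * k) • x ^ (2 * k) := by
  rw [aeval_eq_sum_range' (n := 2 * n + 1) (by rw [natDegree_hermite]; omega)]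
  refine sum_range_two_mul_add_one_of_odd_eq_zero _ (fun k => ?_) n
  rw [coeff_hermite_of_odd_add (by rw [← add_assoc, ← mul_add]; exact odd_two_mul_add_one _),
    zero_smul]

theorem coeff_hermite_two_mul {n k : ℕ} (hk : k ≤ n) :
    ((hermite (2 * n)).coeff (2 * k) : ℝ) =
      (-1) ^ (n - k) * (2 * n)! / (2 ^ (n - k) * (n - k)! * (2 * k)!) := by
  obtain ⟨j, rfl⟩ := Nat.exists_eq_add_of_le hk
  have hchoose := Nat.choose_mul_factorial_mul_factorial (show 2 * k ≤ 2 * (k + j) by omega)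
  rw [show 2 * (k + j) - 2 * k = 2 * j by omega, Nat.factorial_two_mul_eq j,
    show 2 * (k + j) = 2 * j + 2 * k by ring] at hchoose
  rw [Nat.add_sub_cancel_left, show 2 * (k + j) = 2 * j + 2 * k by ring, coeff_hermite_explicit,
    ← hchoose]
  push_cast
  field_simp

end Polynomial

noncomputable def hermiteNormConst (m : ℕ) : ℝ := 2 ^ (1 / 4 : ℝ) / √(m ! : ℝ)

theorem hermiteNormConst_eq_sqrt_mul_succ (m : ℕ) :
    hermiteNormConst m = √(m + 1 : ℝ) * hermiteNormConst (m + 1) := by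
  have : √(m + 1 : ℝ) ≠ 0 := by positivity
  rw [hermiteNormConst, hermiteNormConst, Nat.factorial_succ, Nat.cast_mul,
    Real.sqrt_mul (by positivity)]
  push_cast
  field_simp

theorem hermiteNormConst_mul_natCast (m : ℕ) :
    hermiteNormConst m * m = √(m : ℝ) * hermiteNormConst (m - 1) := by
  rcases m with _ | m
  · simp
  · rw [Nat.add_sub_cancel, hermiteNormConst_eq_sqrt_mul_succ m]
    push_cast
    rw [← mul_assoc, Real.mul_self_sqrt (by positivity), mul_comm]

/-- Mathlib's `hermite m` is the probabilists' polynomial `He_m`. -/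
noncomputable def hermiteFunction (m : ℕ) (x : ℝ) : ℝ :=
  hermiteNormConst m * aeval (2 * √π * x) (hermite m) * exp (-π * x ^ 2)

local notation "ψ" => hermiteFunction

/- At `m = 0` the truncated index `m - 1 = 0` is harmless: its coefficient is `√0 = 0`. -/
theorem two_mul_sqrt_pi_mul_hermiteFunction (m : ℕ) (x : ℝ) :
    2 * √π * x * ψ m x = √(m : ℝ) * ψ (m - 1) x + √(m + 1 : ℝ) * ψ (m + 1) x := by
  have hX := congrArg (aeval (2 * √π * x)) (X_mul_hermite m)
  simp only [map_mul, map_add, aeval_X, map_natCast] at hX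
  simp only [hermiteFunction]
  linear_combination (hermiteNormConst m * exp (-π * x ^ 2)) * hX
    + (exp (-π * x ^ 2) * aeval (2 * √π * x) (hermite (m + 1)))
      * hermiteNormConst_eq_sqrt_mul_succ m
    + (exp (-π * x ^ 2) * aeval (2 * √π * x) (hermite (m - 1))) * hermiteNormConst_mul_natCast m

theorem hasDerivAt_hermiteFunction (m : ℕ) (x : ℝ) :
    HasDerivAt (ψ m) (√π * (√(m : ℝ) * ψ (m - 1) x - √(m + 1 : ℝ) * ψ (m + 1) x)) x := by
  have hpoly : HasDerivAt (fun x => aeval (2 * √π * x) (hermite m))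
      (aeval (2 * √π * x) (derivative (hermite m)) * (2 * √π * 1)) x :=
    (Polynomial.hasDerivAt_aeval (hermite m) (2 * √π * x)).comp x
      ((hasDerivAt_id' x).const_mul (2 * √π))
  have hgauss :
      HasDerivAt (fun x => exp (-π * x ^ 2)) (exp (-π * x ^ 2) * (-π * (2 * x))) x := by
    simpa using ((hasDerivAt_pow 2 x).const_mul (-π)).exp
  refine ((hpoly.const_mul (hermiteNormConst m)).mul hgauss).congr_deriv ?_
  have hx := two_mul_sqrt_pi_mul_hermiteFunction m x
  simp only [derivative_hermite, map_mul, map_natCast, hermiteFunction] at hx ⊢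
  linear_combination -√π * hx
    + (2 * √π * aeval (2 * √π * x) (hermite (m - 1)) * exp (-π * x ^ 2))
      * hermiteNormConst_mul_natCast m
    + (2 * x * hermiteNormConst m * aeval (2 * √π * x) (hermite m) * exp (-π * x ^ 2))
      * Real.mul_self_sqrt pi_pos.le

theorem integrable_aeval_mul_exp_neg_mul_sq {R : Type*} [CommSemiring R] [Algebra R ℝ]
    (q : R[X]) (a : ℝ) {b : ℝ} (hb : 0 < b) :
    Integrable fun x : ℝ => aeval (a * x) q * exp (-b * x ^ 2) := by
  simp only [aeval_eq_sum_range, sum_mul]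
  refine integrable_finsetSum _ fun i _ => ?_
  have hi : Integrable fun x : ℝ => x ^ i * exp (-b * x ^ 2) := by
    simpa [Real.rpow_natCast] using
      integrable_rpow_mul_exp_neg_mul_sq hb (s := i) (by linarith [i.cast_nonneg (α := ℝ)])
  refine (hi.const_mul (q.coeff i • a ^ i)).congr (ae_of_all _ fun x => ?_)
  simp only [Algebra.smul_def, mul_pow]
  ring

theorem exp_neg_pi_mul_sq_mul_self (x : ℝ) :
    exp (-π * x ^ 2) * exp (-π * x ^ 2) = exp (-(2 * π) * x ^ 2) := by
  rw [← Real.exp_add]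
  ring_nf

theorem integrable_hermiteFunction_mul (m p : ℕ) : Integrable fun x => ψ m x * ψ p x := by
  refine ((integrable_aeval_mul_exp_neg_mul_sq (hermite m * hermite p) (2 * √π)
    (by positivity : 0 < 2 * π)).const_mul (hermiteNormConst m * hermiteNormConst p)).congr
    (ae_of_all _ fun x => ?_)
  simp only [hermiteFunction, map_mul, ← exp_neg_pi_mul_sq_mul_self]
  ring

theorem hasDerivAt_hermiteFunction_mul (m p : ℕ) (x : ℝ) :
    HasDerivAt (fun x => ψ m x * ψ p x)
      (2 * √π * (√(m : ℝ) * (ψ (m - 1) x * ψ p x) - √(p + 1 : ℝ) * (ψ m x * ψ (p + 1) x)))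
      x := by
  refine ((hasDerivAt_hermiteFunction m x).mul (hasDerivAt_hermiteFunction p x)).congr_deriv ?_
  linear_combination (√π * ψ p x) * two_mul_sqrt_pi_mul_hermiteFunction m x
    - (√π * ψ m x) * two_mul_sqrt_pi_mul_hermiteFunction p x

theorem sqrt_mul_integral_hermiteFunction_mul (m p : ℕ) :
    √(m : ℝ) * ∫ x, ψ (m - 1) x * ψ p x = √(p + 1 : ℝ) * ∫ x, ψ m x * ψ (p + 1) x := by
  have h := integral_eq_zero_of_hasDerivAt_of_integrable (hasDerivAt_hermiteFunction_mul m p)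
    ((((integrable_hermiteFunction_mul _ _).const_mul _).sub
      ((integrable_hermiteFunction_mul _ _).const_mul _)).const_mul _)
    (integrable_hermiteFunction_mul m p)
  rw [integral_const_mul, integral_sub ((integrable_hermiteFunction_mul _ _).const_mul _)
    ((integrable_hermiteFunction_mul _ _).const_mul _), integral_const_mul,
    integral_const_mul] at h
  have hpi : 2 * √π ≠ 0 := by positivity
  linear_combination (mul_eq_zero.mp h).resolve_left hpi

theorem integral_hermiteFunction_zero_mul_self : ∫ x, ψ 0 x * ψ 0 x = 1 := by
  have h : ∀ x, ψ 0 x * ψ 0 x = √2 * exp (-(2 * π) * x ^ 2) := by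
    intro x
    have h2 : (2 : ℝ) ^ (1 / 4 : ℝ) * 2 ^ (1 / 4 : ℝ) = √2 := by
      rw [← Real.rpow_add two_pos, Real.sqrt_eq_rpow]
      norm_num
    simp only [hermiteFunction, hermiteNormConst, hermite_zero, map_one, Nat.factorial_zero,
      Nat.cast_one, Real.sqrt_one, div_one, mul_one, ← h2, ← exp_neg_pi_mul_sq_mul_self]
    ring
  simp only [h, integral_const_mul, integral_gaussian]
  rw [← Real.sqrt_mul zero_le_two, show 2 * (π / (2 * π)) = 1 by field_simp, Real.sqrt_one]

theorem integral_hermiteFunction_zero_mul_succ (p : ℕ) : ∫ x, ψ 0 x * ψ (p + 1) x = 0 := by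
  have h := sqrt_mul_integral_hermiteFunction_mul 0 p
  have hp : √(p + 1 : ℝ) ≠ 0 := by positivity
  rw [Nat.cast_zero, Real.sqrt_zero, zero_mul, eq_comm, mul_eq_zero] at h
  exact h.resolve_left hp

theorem integral_hermiteFunction_mul (m p : ℕ) :
    ∫ x, ψ m x * ψ p x = if m = p then 1 else 0 := by
  induction m generalizing p with
  | zero =>
    rcases p with _ | p
    · simpa using integral_hermiteFunction_zero_mul_self
    · simpa using integral_hermiteFunction_zero_mul_succ p
  | succ m ih =>
    rcases p with _ | p
    · simp_rw [mul_comm (ψ (m + 1) _)]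
      simpa using integral_hermiteFunction_zero_mul_succ m
    · have h := sqrt_mul_integral_hermiteFunction_mul (m + 1) p
      have hp : √(p + 1 : ℝ) ≠ 0 := by positivity
      rw [Nat.add_sub_cancel, ih p] at h
      by_cases hmp : m = p
      · subst hmp
        push_cast at h
        rw [if_pos rfl] at h ⊢
        apply mul_left_cancel₀ hp
        linear_combination -h
      · rw [if_neg hmp, mul_zero, eq_comm, mul_eq_zero] at h
        rw [if_neg (by omega)]
        exact h.resolve_left hp

theorem mul_deriv_hermiteFunction_add_half (m : ℕ) (x : ℝ) :
    x * deriv (ψ m) x + 1 / 2 * ψ m x =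
      (√(m : ℝ) * √(m - 1 : ℝ) * ψ (m - 2) x
        - √(m + 1 : ℝ) * √(m + 2 : ℝ) * ψ (m + 2) x) / 2 := by
  rw [(hasDerivAt_hermiteFunction m x).deriv]
  have hup := two_mul_sqrt_pi_mul_hermiteFunction (m + 1) x
  push_cast at hup
  rcases m with _ | k
  · norm_num at hup ⊢
    linear_combination -(1 / 2) * hup
  · have hdown := two_mul_sqrt_pi_mul_hermiteFunction k x
    push_cast at hup ⊢
    rw [show (k : ℝ) + 1 - 1 = k by ring, show (k : ℝ) + 1 + 2 = k + 1 + 1 + 1 by ring]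
    linear_combination (√(k + 1 : ℝ) / 2) * hdown - (√(k + 1 + 1 : ℝ) / 2) * hup
      + (ψ (k + 1) x / 2) * Real.mul_self_sqrt (by positivity : (0 : ℝ) ≤ k + 1)
      - (ψ (k + 1) x / 2) * Real.mul_self_sqrt (by positivity : (0 : ℝ) ≤ k + 1 + 1)

theorem integral_mul_deriv_hermiteFunction_add_half_mul (m : ℕ) :
    ∫ x, (x * deriv (ψ m) x + 1 / 2 * ψ m x) * ψ (m + 2) x =
      -(1 / 2) * √((m + 1) * (m + 2) : ℝ) := by
  have h : ∀ x, (x * deriv (ψ m) x + 1 / 2 * ψ m x) * ψ (m + 2) x =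
      √(m : ℝ) * √(m - 1 : ℝ) / 2 * (ψ (m - 2) x * ψ (m + 2) x)
        - √(m + 1 : ℝ) * √(m + 2 : ℝ) / 2 * (ψ (m + 2) x * ψ (m + 2) x) := by
    intro x
    rw [mul_deriv_hermiteFunction_add_half]
    ring
  simp only [h]
  rw [integral_sub ((integrable_hermiteFunction_mul _ _).const_mul _)
    ((integrable_hermiteFunction_mul _ _).const_mul _), integral_const_mul, integral_const_mul,
    integral_hermiteFunction_mul, integral_hermiteFunction_mul, if_neg (by omega), if_pos rfl,
    Real.sqrt_mul (by positivity)]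
  ring

theorem rpow_two_three_mul_sub_add_quarter {n k : ℕ} (hk : k ≤ n) :
    (2 : ℝ) ^ (3 * (k : ℝ) - n + 1 / 4) = 2 ^ (1 / 4 : ℝ) * 4 ^ k / 2 ^ (n - k) := by
  rw [show 3 * (k : ℝ) - n + 1 / 4 = 1 / 4 + ((2 * k : ℕ) : ℝ) - ((n - k : ℕ) : ℝ) by
      push_cast [hk]; ring,
    Real.rpow_sub two_pos, Real.rpow_add two_pos, Real.rpow_natCast, Real.rpow_natCast, pow_mul]
  norm_num

theorem h2_eq_hermiteFunction (n : ℕ) : h2 n = ψ (2 * n) := by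
  funext x
  rw [h2, hermiteFunction, aeval_hermite_two_mul, mul_sum, sum_mul]
  refine sum_congr rfl fun k hk => ?_
  have hkn : k ≤ n := Nat.lt_succ_iff.mp (mem_range.mp hk)
  have hF0 : √((2 * n)! : ℝ) ≠ 0 := by positivity
  have hpow : (2 * √π * x) ^ (2 * k) = 4 ^ k * π ^ k * x ^ (2 * k) := by
    rw [pow_mul, pow_mul, mul_pow, mul_pow, mul_pow, Real.sq_sqrt pi_pos.le]
    ring
  rw [zsmul_eq_mul, coeff_hermite_two_mul hkn, rpow_two_three_mul_sub_add_quarter hkn,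
    hermiteNormConst, hpow]
  field_simp
  rw [Real.sq_sqrt (by positivity), mul_comm]

/-- the matrix element `⟨(H + 1/2) h_{2n}, h_{2n+2}⟩` of `H = x ∂_x`
equals `-(1/2)√((2n+1)(2n+2))`. -/
theorem stmt5 (n : ℕ) :
    (∫ x : ℝ, (x * deriv (h2 n) x + (1 / 2) * h2 n x) * h2 (n + 1) x)
      = -(1 / 2) * Real.sqrt ((2 * (n : ℝ) + 1) * (2 * (n : ℝ) + 2)) := by
  rw [h2_eq_hermiteFunction, h2_eq_hermiteFunction, show 2 * (n + 1) = 2 * n + 2 by ring,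
    integral_mul_deriv_hermiteFunction_add_half_mul]
  push_cast
  ring_nf
end

section
/- Let λ > 0. For every n ∈ ℕ: ∫_ℝ (W_λ h_{4n})(x) · h_{4n+4}(x) dx = (1/4)√((4n+1)(4n+2)(4n+3)(4n+4)), and ∫_ℝ (W_λ h_{4n})(x) · h_{4n}(x) dx = -8n² - 2n - 3/4 + 2π λ² (8n+1). (These are the off-diagonal and diagonal coefficients of the Jacobi matrix of the prolate operator restricted to the even eigenspace of the Fourier transform.) -/
open MeasureTheory Finset

/-- The prolate wave operator `(W_λ ψ)(q) = -d/dq((λ²-q²)ψ'(q)) + (2πλq)² ψ(q)`. -/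
noncomputable def W (lam : ℝ) (ψ : ℝ → ℝ) (q : ℝ) : ℝ :=
  -deriv (fun t => (lam ^ 2 - t ^ 2) * deriv ψ t) q + (2 * Real.pi * lam * q) ^ 2 * ψ q

/-!
Write `h_m(x) = c_m He_m(2√π x) e^{-π x²}` with the probabilists' Hermite polynomials
`He_m`; the scaling `y = 2√π x` turns the weight `e^{-2π x²}` into `e^{-y²/2}`. The operator
`W_λ` acts on `P(2√π x) e^{-π x²}` through a second-order differential operator on the
polynomial `P`. On `He_m` its `λ`-part is the harmonic oscillator, with eigenvalue
`2π(2m+1)`, and by the three-term recurrence and Hermite's equation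
`He_m'' = y He_m' - m He_m` the remaining part equals
`(He_{m+4} - (2m² + 2m + 3) He_m + He_m⁽⁴⁾) / 4`. Integrating by parts,
`∫ P He_b e^{-y²/2} = ∫ P⁽ᵇ⁾ e^{-y²/2}`, so `He_b` is orthogonal to every polynomial of
lower degree and `∫ He_b² e^{-y²/2} = b! √(2π)`; the two matrix entries are read off.
-/

open Polynomial Real

noncomputable def hermiteReal (n : ℕ) : ℝ[X] := (hermite n).map (Int.castRingHom ℝ)

theorem hermiteReal_zero : hermiteReal 0 = 1 := by simp [hermiteReal]

theorem hermiteReal_succ (n : ℕ) :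
    hermiteReal (n + 1) = X * hermiteReal n - derivative (hermiteReal n) := by
  simp [hermiteReal, hermite_succ, derivative_map]

theorem derivative_hermiteReal_succ (n : ℕ) :
    derivative (hermiteReal (n + 1)) = (n + 1 : ℝ[X]) * hermiteReal n := by
  induction n with
  | zero => simp [hermiteReal_succ, hermiteReal_zero]
  | succ n ih =>
    rw [hermiteReal_succ (n + 1), derivative_sub, derivative_mul, ih, derivative_mul,
      derivative_X, hermiteReal_succ n]
    simp only [derivative_add, derivative_natCast, derivative_one, zero_mul, zero_add]
    push_cast
    ring

theorem hermiteReal_add_two (n : ℕ) :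
    hermiteReal (n + 2) = X * hermiteReal (n + 1) - (n + 1 : ℝ[X]) * hermiteReal n := by
  rw [hermiteReal_succ (n + 1), derivative_hermiteReal_succ]

theorem derivative_derivative_hermiteReal (n : ℕ) :
    derivative (derivative (hermiteReal n)) =
      X * derivative (hermiteReal n) - (n : ℝ[X]) * hermiteReal n := by
  have h := congrArg derivative (hermiteReal_succ n)
  rw [derivative_hermiteReal_succ, derivative_sub, derivative_mul, derivative_X] at h
  linear_combination h

theorem natDegree_hermiteReal (n : ℕ) : (hermiteReal n).natDegree = n := by
  rw [hermiteReal, natDegree_map_eq_of_injective (RingHom.injective_int _), natDegree_hermite]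

theorem iterate_derivative_hermiteReal_self (n : ℕ) :
    derivative^[n] (hermiteReal n) = (n.factorial : ℝ[X]) := by
  induction n with
  | zero => simp [hermiteReal_zero]
  | succ n ih =>
    rw [Function.iterate_succ_apply, derivative_hermiteReal_succ,
      show (n + 1 : ℝ[X]) = C ((n + 1 : ℕ) : ℝ) by simp, iterate_derivative_C_mul, ih]
    simp [Nat.factorial_succ]

theorem coeff_hermiteReal (n j : ℕ) : (hermiteReal n).coeff j = (hermite n).coeff j := by
  simp [hermiteReal, coeff_map]

theorem eval_hermiteReal_two_mul (N : ℕ) (y : ℝ) :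
    (hermiteReal (2 * N)).eval y = ∑ k ∈ range (N + 1),
      (-1) ^ (N - k) * ((2 * (N - k) - 1).doubleFactorial * (2 * N).choose (2 * k) : ℝ) *
        y ^ (2 * k) := by
  have hodd : ∀ j ∈ range (2 * N + 1), j ∉ (range (N + 1)).image (2 * ·) →
      (hermiteReal (2 * N)).coeff j * y ^ j = 0 := by
    intro j hj hnot
    simp only [mem_image, mem_range, not_exists, not_and] at hj hnot
    have : Odd (2 * N + j) := by
      obtain ⟨a, rfl | rfl⟩ := Nat.even_or_odd' j
      · exact absurd rfl (hnot a (by omega))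
      · exact ⟨N + a, by ring⟩
    rw [coeff_hermiteReal, coeff_hermite_of_odd_add this, Int.cast_zero, zero_mul]
  rw [eval_eq_sum_range, natDegree_hermiteReal, ← sum_subset ?_ hodd,
    sum_image (fun a _ b _ h => by omega)]
  · refine sum_congr rfl fun k hk => ?_
    have hkN : k ≤ N := by simpa [Nat.lt_succ_iff] using hk
    have h := coeff_hermite_explicit (N - k) (2 * k)
    rw [show 2 * (N - k) + 2 * k = 2 * N by omega] at h
    rw [coeff_hermiteReal, h]
    push_cast
    ring
  · intro j hj
    simp only [mem_image, mem_range] at hj ⊢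
    omega

noncomputable def gaussDeriv (P : ℝ[X]) : ℝ[X] := C 2 * derivative P - X * P

noncomputable def polyGauss (P : ℝ[X]) (x : ℝ) : ℝ :=
  P.eval (2 * √π * x) * exp (-π * x ^ 2)

theorem hasDerivAt_polyGauss (P : ℝ[X]) (x : ℝ) :
    HasDerivAt (polyGauss P) (√π * polyGauss (gaussDeriv P) x) x := by
  have hlin : HasDerivAt (fun t : ℝ => 2 * √π * t) (2 * √π) x := by
    simpa using (hasDerivAt_id x).const_mul (2 * √π)
  have hq : HasDerivAt (fun t : ℝ => -π * t ^ 2) (-π * (2 * x)) x := by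
    simpa using (hasDerivAt_pow 2 x).const_mul (-π)
  refine ((P.hasDerivAt _).comp x hlin |>.mul hq.exp).congr_deriv ?_
  have hπ : √π * √π = π := Real.mul_self_sqrt pi_pos.le
  simp only [polyGauss, gaussDeriv, eval_sub, eval_mul, eval_C, eval_X, Function.comp_apply]
  linear_combination (2 * x * P.eval (2 * √π * x) * exp (-π * x ^ 2)) * hπ

theorem deriv_polyGauss (P : ℝ[X]) :
    deriv (polyGauss P) = fun x => √π * polyGauss (gaussDeriv P) x :=
  funext fun x => (hasDerivAt_polyGauss P x).deriv

-- For `ψ = polyGauss P`, `-ψ'' + 4π² x² ψ = π · polyGauss (oscillatorPoly P)`.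
noncomputable def oscillatorPoly (P : ℝ[X]) : ℝ[X] := X ^ 2 * P - gaussDeriv (gaussDeriv P)

noncomputable def prolatePoly (lam : ℝ) (P : ℝ[X]) : ℝ[X] :=
  X * gaussDeriv P + C (1 / 4) * X ^ 2 * gaussDeriv (gaussDeriv P) +
    C (π * lam ^ 2) * oscillatorPoly P

theorem W_polyGauss (lam : ℝ) (P : ℝ[X]) :
    W lam (polyGauss P) = polyGauss (prolatePoly lam P) := by
  ext q
  have hA : HasDerivAt (fun t : ℝ => lam ^ 2 - t ^ 2) (-(2 * q)) q := by
    simpa using (hasDerivAt_pow 2 q).const_sub (lam ^ 2)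
  have hAB : HasDerivAt (fun t => (lam ^ 2 - t ^ 2) * (√π * polyGauss (gaussDeriv P) t)) _ q :=
    hA.mul ((hasDerivAt_polyGauss (gaussDeriv P) q).const_mul √π)
  have hπ : √π * √π = π := Real.mul_self_sqrt pi_pos.le
  rw [W, deriv_polyGauss, hAB.deriv]
  simp only [prolatePoly, oscillatorPoly, polyGauss, eval_add, eval_sub, eval_mul, eval_C,
    eval_X, eval_pow]
  linear_combination (-lam ^ 2 * ((gaussDeriv (gaussDeriv P)).eval (2 * √π * q)
    + 4 * π * q ^ 2 * P.eval (2 * √π * q)) * exp (-π * q ^ 2)) * hπ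

theorem oscillatorPoly_hermiteReal (m : ℕ) :
    oscillatorPoly (hermiteReal m) = C (4 * m + 2 : ℝ) * hermiteReal m := by
  simp only [oscillatorPoly, gaussDeriv, derivative_sub, derivative_mul, derivative_X,
    derivative_C, zero_mul, zero_add, one_mul, derivative_derivative_hermiteReal]
  simp only [map_add, map_mul, map_ofNat, map_natCast]
  ring

theorem prolatePoly_hermiteReal (lam : ℝ) (m : ℕ) :
    prolatePoly lam (hermiteReal m) =
      C (1 / 4) * hermiteReal (m + 4)
        + C (2 * π * lam ^ 2 * (2 * m + 1) - (2 * m ^ 2 + 2 * m + 3) / 4) * hermiteReal m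
        + C (1 / 4) * derivative^[4] (hermiteReal m) := by
  have h2 := derivative_derivative_hermiteReal m
  have h3 := congrArg derivative h2
  have h4 := congrArg derivative h3
  simp only [derivative_sub, derivative_add, derivative_mul, derivative_X, derivative_natCast,
    zero_mul, zero_add, one_mul] at h3 h4
  rw [hermiteReal_add_two (m + 2), show m + 2 + 1 = m + 3 by ring, hermiteReal_add_two (m + 1),
    hermiteReal_add_two m, hermiteReal_succ]
  simp only [prolatePoly, oscillatorPoly_hermiteReal, gaussDeriv, derivative_sub, derivative_mul,
    derivative_X, derivative_C, Function.iterate_succ_apply', Function.iterate_zero_apply,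
    zero_mul, zero_add, one_mul]
  rw [h4, h3, h2, show 2 * π * lam ^ 2 * (2 * m + 1) - (2 * m ^ 2 + 2 * m + 3) / 4
    = 2 * π * lam ^ 2 * (2 * m + 1) - 1 / 4 * (2 * m ^ 2 + 2 * m + 3) by ring]
  -- `ring` treats `C (1 / 4)` as an atom, so its inverse relation to `4` is supplied by hand.
  have hC : C (1 / 4 : ℝ) * 4 = 1 := by rw [← C_ofNat, ← C_mul]; norm_num
  simp only [map_add, map_mul, map_sub, map_natCast, map_ofNat, map_pow, map_one]
  push_cast
  linear_combination (X ^ 2 * hermiteReal m - 2 * X * derivative (hermiteReal m)) * hC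

theorem integrable_eval_mul_exp_neg_mul_sq (P : ℝ[X]) {b : ℝ} (hb : 0 < b) :
    Integrable fun y : ℝ => P.eval y * exp (-b * y ^ 2) := by
  induction P using Polynomial.induction_on' with
  | add P Q hP hQ =>
    simp only [eval_add, add_mul]
    exact hP.add hQ
  | monomial n a =>
    have h := integrable_rpow_mul_exp_neg_mul_sq hb (s := n)
      (neg_one_lt_zero.trans_le n.cast_nonneg)
    simp only [Real.rpow_natCast] at h
    simpa [mul_assoc] using h.const_mul a

noncomputable def gaussIntegral : ℝ[X] →ₗ[ℝ] ℝ where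
  toFun P := ∫ y, P.eval y * exp (-(1 / 2) * y ^ 2)
  map_add' P Q := by
    simpa [add_mul] using integral_add (integrable_eval_mul_exp_neg_mul_sq P (by norm_num))
      (integrable_eval_mul_exp_neg_mul_sq Q (by norm_num))
  map_smul' c P := by simp [mul_assoc, integral_const_mul]

theorem gaussIntegral_apply (P : ℝ[X]) :
    gaussIntegral P = ∫ y, P.eval y * exp (-(1 / 2) * y ^ 2) := rfl

theorem gaussIntegral_C (a : ℝ) : gaussIntegral (C a) = a * √(2 * π) := by
  rw [gaussIntegral_apply]
  simp only [eval_C, integral_const_mul, integral_gaussian]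
  congr 2
  ring

theorem hasDerivAt_hermiteReal_mul_exp (n : ℕ) (y : ℝ) :
    HasDerivAt (fun t => (hermiteReal n).eval t * exp (-(1 / 2) * t ^ 2))
      (-((hermiteReal (n + 1)).eval y * exp (-(1 / 2) * y ^ 2))) y := by
  have hq : HasDerivAt (fun t : ℝ => -(1 / 2) * t ^ 2) (-y) y := by
    simpa using (hasDerivAt_pow 2 y).const_mul (-(1 / 2 : ℝ))
  refine (((hermiteReal n).hasDerivAt y).mul hq.exp).congr_deriv ?_
  rw [hermiteReal_succ]
  simp only [eval_sub, eval_mul, eval_X]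
  ring

theorem gaussIntegral_mul_hermiteReal_succ (P : ℝ[X]) (n : ℕ) :
    gaussIntegral (P * hermiteReal (n + 1)) = gaussIntegral (derivative P * hermiteReal n) := by
  have hint : ∀ Q : ℝ[X], Integrable
      (fun y => Q.eval y * ((hermiteReal n).eval y * exp (-(1 / 2) * y ^ 2))) := by
    intro Q
    simpa [mul_assoc] using
      integrable_eval_mul_exp_neg_mul_sq (Q * hermiteReal n) (b := 1 / 2) (by norm_num)
  have hibp := integral_mul_deriv_eq_deriv_mul_of_integrable
    (u := fun y => P.eval y) (fun y _ => P.hasDerivAt y)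
    (fun y _ => hasDerivAt_hermiteReal_mul_exp n y) ?_ (hint (derivative P)) (hint P)
  · simp only [gaussIntegral_apply, eval_mul, mul_assoc]
    simp only [mul_neg, integral_neg, neg_inj] at hibp
    exact hibp
  · refine (integrable_eval_mul_exp_neg_mul_sq (P * hermiteReal (n + 1)) (b := 1 / 2)
      (by norm_num)).neg.congr (Filter.Eventually.of_forall fun y => ?_)
    simp [mul_assoc]

theorem gaussIntegral_mul_hermiteReal (P : ℝ[X]) (n : ℕ) :
    gaussIntegral (P * hermiteReal n) = gaussIntegral (derivative^[n] P) := by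
  induction n generalizing P with
  | zero => simp [hermiteReal_zero]
  | succ n ih => rw [gaussIntegral_mul_hermiteReal_succ, ih, Function.iterate_succ_apply]

theorem gaussIntegral_mul_hermiteReal_of_natDegree_lt {P : ℝ[X]} {n : ℕ} (h : P.natDegree < n) :
    gaussIntegral (P * hermiteReal n) = 0 := by
  rw [gaussIntegral_mul_hermiteReal, iterate_derivative_eq_zero h, map_zero]

theorem gaussIntegral_hermiteReal_mul_self (n : ℕ) :
    gaussIntegral (hermiteReal n * hermiteReal n) = n.factorial * √(2 * π) := by
  rw [gaussIntegral_mul_hermiteReal, iterate_derivative_hermiteReal_self, ← map_natCast C,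
    gaussIntegral_C]

theorem gaussIntegral_prolatePoly_hermiteReal_mul_add_four (lam : ℝ) (m : ℕ) :
    gaussIntegral (prolatePoly lam (hermiteReal m) * hermiteReal (m + 4)) =
      (m + 4).factorial / 4 * √(2 * π) := by
  have hlow : ∀ P : ℝ[X], P.natDegree ≤ m → gaussIntegral (P * hermiteReal (m + 4)) = 0 :=
    fun P hP => gaussIntegral_mul_hermiteReal_of_natDegree_lt (by omega)
  rw [prolatePoly_hermiteReal, add_mul, add_mul, map_add, map_add, hlow (C _ * hermiteReal m),
    hlow (C _ * derivative^[4] _), mul_assoc, C_mul', map_smul, gaussIntegral_hermiteReal_mul_self,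
    smul_eq_mul]
  · ring
  · refine (natDegree_C_mul_le _ _).trans ((natDegree_iterate_derivative _ _).trans ?_)
    rw [natDegree_hermiteReal]
    omega
  · exact (natDegree_C_mul_le _ _).trans (natDegree_hermiteReal m).le

theorem gaussIntegral_prolatePoly_hermiteReal_mul_self (lam : ℝ) (m : ℕ) :
    gaussIntegral (prolatePoly lam (hermiteReal m) * hermiteReal m) =
      (2 * π * lam ^ 2 * (2 * m + 1) - (2 * m ^ 2 + 2 * m + 3) / 4) *
        (m.factorial * √(2 * π)) := by
  have hhigher : gaussIntegral (hermiteReal (m + 4) * hermiteReal m) = 0 := by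
    rw [mul_comm]
    exact gaussIntegral_mul_hermiteReal_of_natDegree_lt (by rw [natDegree_hermiteReal]; omega)
  have hlower : gaussIntegral (derivative^[4] (hermiteReal m) * hermiteReal m) = 0 := by
    rw [gaussIntegral_mul_hermiteReal, ← Function.iterate_add_apply,
      iterate_derivative_eq_zero (by rw [natDegree_hermiteReal]; omega), map_zero]
  rw [prolatePoly_hermiteReal, add_mul, add_mul, map_add, map_add]
  simp only [C_mul', smul_mul_assoc, map_smul, hhigher, hlower, gaussIntegral_hermiteReal_mul_self,
    smul_eq_mul]
  ring

theorem integral_polyGauss_mul_polyGauss (P Q : ℝ[X]) :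
    ∫ x, polyGauss P x * polyGauss Q x = gaussIntegral (P * Q) / (2 * √π) := by
  have hπ : √π * √π = π := Real.mul_self_sqrt pi_pos.le
  set g : ℝ → ℝ := fun y => (P * Q).eval y * exp (-(1 / 2) * y ^ 2)
  have h : ∀ x, polyGauss P x * polyGauss Q x = g (2 * √π * x) := by
    intro x
    simp only [g, polyGauss, eval_mul]
    rw [show -(1 / 2) * (2 * √π * x) ^ 2 = -π * x ^ 2 + -π * x ^ 2 by
      linear_combination (-2 * x ^ 2) * hπ, exp_add]
    ring
  rw [integral_congr_ae (.of_forall h), Measure.integral_comp_mul_left g, gaussIntegral_apply,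
    smul_eq_mul, abs_of_pos (by positivity), inv_mul_eq_div]

theorem Nat.factorial_two_mul (n : ℕ) :
    (2 * n).factorial = 2 ^ n * n.factorial * (2 * n - 1).doubleFactorial := by
  cases n with
  | zero => rfl
  | succ n =>
    rw [show 2 * (n + 1) = (2 * n + 1) + 1 by ring, Nat.factorial_eq_mul_doubleFactorial,
      show 2 * n + 1 + 1 = 2 * (n + 1) by ring, Nat.doubleFactorial_two_mul,
      show 2 * (n + 1) - 1 = 2 * n + 1 by omega]

noncomputable def hermiteFun (m : ℕ) (x : ℝ) : ℝ :=
  2 ^ (1 / 4 : ℝ) / √(m.factorial) * polyGauss (hermiteReal m) x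

theorem h2_eq_hermiteFun (N : ℕ) : h2 N = hermiteFun (2 * N) := by
  ext x
  rw [h2, hermiteFun, polyGauss, eval_hermiteReal_two_mul, sum_mul, mul_sum]
  refine sum_congr rfl fun k hk => ?_
  obtain ⟨j, rfl⟩ : ∃ j, N = k + j := ⟨N - k, by simp at hk; omega⟩
  have hF : ((2 * (k + j)).factorial : ℝ) =
      (2 * (k + j)).choose (2 * k) * (2 * k).factorial * (2 * j).factorial := by
    rw [← Nat.choose_mul_factorial_mul_factorial (show 2 * k ≤ 2 * (k + j) by omega),
      show 2 * (k + j) - 2 * k = 2 * j by omega]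
    push_cast
    ring
  have hdf : ((2 * j).factorial : ℝ) = 2 ^ j * j.factorial * (2 * j - 1).doubleFactorial := by
    exact_mod_cast Nat.factorial_two_mul j
  have hpow : (2 : ℝ) ^ (3 * (k : ℝ) - ((k + j : ℕ) : ℝ) + 1 / 4) =
      2 ^ (1 / 4 : ℝ) * 2 ^ (2 * k) / 2 ^ j := by
    rw [show 3 * (k : ℝ) - ((k + j : ℕ) : ℝ) + 1 / 4 = 1 / 4 + ((2 * k : ℕ) : ℝ) - j by
      push_cast; ring, Real.rpow_sub two_pos, Real.rpow_add two_pos, Real.rpow_natCast,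
      Real.rpow_natCast]
  have hy : (2 * √π * x) ^ (2 * k) = 2 ^ (2 * k) * π ^ k * x ^ (2 * k) := by
    rw [mul_pow, mul_pow, pow_mul √π, Real.sq_sqrt pi_pos.le]
  rw [hpow, hy, Nat.add_sub_cancel_left]
  field_simp
  rw [Real.sq_sqrt (Nat.cast_nonneg _), hF, hdf]
  ring

theorem W_const_mul (lam c : ℝ) (f : ℝ → ℝ) :
    W lam (fun x => c * f x) = fun q => c * W lam f q := by
  ext q
  simp only [W, deriv_const_mul_field', mul_left_comm _ c]
  ring

theorem integral_W_hermiteFun_mul_hermiteFun (lam : ℝ) (m k : ℕ) :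
    ∫ x, W lam (hermiteFun m) x * hermiteFun k x =
      2 ^ (1 / 4 : ℝ) / √(m.factorial) * (2 ^ (1 / 4 : ℝ) / √(k.factorial)) *
        (gaussIntegral (prolatePoly lam (hermiteReal m) * hermiteReal k) / (2 * √π)) := by
  rw [← integral_polyGauss_mul_polyGauss, ← W_polyGauss, ← integral_const_mul]
  unfold hermiteFun
  rw [W_const_mul]
  congr 1 with x
  ring

theorem two_rpow_quarter_sq : ((2 : ℝ) ^ (1 / 4 : ℝ)) ^ 2 = √2 := by
  rw [← Real.rpow_natCast, ← Real.rpow_mul zero_le_two, Real.sqrt_eq_rpow]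
  norm_num

theorem integral_W_hermiteFun_mul_hermiteFun_add_four (lam : ℝ) (m : ℕ) :
    ∫ x, W lam (hermiteFun m) x * hermiteFun (m + 4) x =
      1 / 4 * √((m + 1) * (m + 2) * (m + 3) * (m + 4)) := by
  have hfact :
      ((m + 4).factorial : ℝ) = m.factorial * ((m + 1) * (m + 2) * (m + 3) * (m + 4)) := by
    simp only [Nat.factorial_succ]
    push_cast
    ring
  rw [integral_W_hermiteFun_mul_hermiteFun, gaussIntegral_prolatePoly_hermiteReal_mul_add_four,
    hfact, Real.sqrt_mul (by positivity), Real.sqrt_mul' _ (by positivity : (0 : ℝ) ≤ π)]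
  field_simp
  rw [two_rpow_quarter_sq, Real.sq_sqrt (by positivity), Real.sq_sqrt (by positivity)]
  linear_combination ((m + 1) * (m + 2) * (m + 3) * (m + 4) * m.factorial : ℝ) *
    Real.mul_self_sqrt zero_le_two

theorem integral_W_hermiteFun_mul_self (lam : ℝ) (m : ℕ) :
    ∫ x, W lam (hermiteFun m) x * hermiteFun m x =
      2 * π * lam ^ 2 * (2 * m + 1) - (2 * m ^ 2 + 2 * m + 3) / 4 := by
  rw [integral_W_hermiteFun_mul_hermiteFun, gaussIntegral_prolatePoly_hermiteReal_mul_self,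
    Real.sqrt_mul' _ (by positivity : (0 : ℝ) ≤ π)]
  field_simp
  rw [two_rpow_quarter_sq, Real.sq_sqrt (by positivity)]
  linear_combination
    ((8 * π * lam ^ 2 * (2 * m + 1) - (2 * m * (m + 1) + 3)) * m.factorial : ℝ) *
      Real.mul_self_sqrt zero_le_two

theorem stmt6_general (lam : ℝ) (n : ℕ) :
    (∫ x : ℝ, W lam (h2 (2 * n)) x * h2 (2 * n + 2) x)
        = (1 / 4) * Real.sqrt ((4 * (n : ℝ) + 1) * (4 * (n : ℝ) + 2) *
            (4 * (n : ℝ) + 3) * (4 * (n : ℝ) + 4))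
    ∧ (∫ x : ℝ, W lam (h2 (2 * n)) x * h2 (2 * n) x)
        = -8 * (n : ℝ) ^ 2 - 2 * (n : ℝ) - 3 / 4 + 2 * Real.pi * lam ^ 2 * (8 * (n : ℝ) + 1) := by
  rw [h2_eq_hermiteFun, h2_eq_hermiteFun, show 2 * (2 * n) = 4 * n by ring,
    show 2 * (2 * n + 2) = 4 * n + 4 by ring, integral_W_hermiteFun_mul_hermiteFun_add_four,
    integral_W_hermiteFun_mul_self]
  push_cast
  exact ⟨rfl, by ring⟩

/-- Jacobi matrix coefficients of the prolate operator on the even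
eigenspace of the Fourier transform. -/
theorem stmt6 (lam : ℝ) (hlam : 0 < lam) (n : ℕ) :
    (∫ x : ℝ, W lam (h2 (2 * n)) x * h2 (2 * n + 2) x)
        = (1 / 4) * Real.sqrt ((4 * (n : ℝ) + 1) * (4 * (n : ℝ) + 2) *
            (4 * (n : ℝ) + 3) * (4 * (n : ℝ) + 4))
    ∧ (∫ x : ℝ, W lam (h2 (2 * n)) x * h2 (2 * n) x)
        = -8 * (n : ℝ) ^ 2 - 2 * (n : ℝ) - 3 / 4 + 2 * Real.pi * lam ^ 2 * (8 * (n : ℝ) + 1) :=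
  stmt6_general lam n
end

section
/- Let a : ℕ → ℝ with a_n > 0 for all n, and let A and N be the linear endomorphisms of the space of finitely supported sequences v : ℕ → ℂ defined by (A v)_n = a_n v_{n+1} + a_{n-1} v_{n-1} (with the convention a_{-1} = 0) and (N v)_n = n v_n. Then the identity [A, [A, N]] v = -(4 N + 1) v holds for every finitely supported v if and only if a_n = (1/2)√((2n+1)(2n+2)) for every n ∈ ℕ. (These are precisely the coefficients for which the pair (A, N) generates the even metaplectic representation of sl(2, ℝ).) -/
noncomputable section

/-- The hermitian Jacobi matrix with zero diagonal and real entries `a_n` above and below the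
diagonal, as an endomorphism of finitely supported complex sequences:
`(A v)_n = a_n v_{n+1} + a_{n-1} v_{n-1}` (with the convention `a_{-1} = 0`). -/
def jacobiA (a : ℕ → ℝ) : Module.End ℂ (ℕ →₀ ℂ) where
  toFun v := Finsupp.onFinset (v.support.image (· + 1) ∪ v.support.image (· - 1))
    (fun n => (a n : ℂ) * v (n + 1) +
      (if n = 0 then 0 else (a (n - 1) : ℂ) * v (n - 1)))
    (fun n hn => by
      by_cases h1 : v (n + 1) = 0
      · have h2 : (if n = 0 then 0 else (a (n - 1) : ℂ) * v (n - 1)) ≠ 0 := by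
          intro h
          exact hn (by simp only [h1, h, mul_zero, add_zero])
        rcases Nat.eq_zero_or_pos n with rfl | hpos
        · simp at h2
        have hne : n ≠ 0 := Nat.pos_iff_ne_zero.mp hpos
        have h3 : v (n - 1) ≠ 0 := by
          intro h
          exact h2 (by rw [h, mul_zero, if_neg hne])
        exact Finset.mem_union_left _
          (Finset.mem_image.mpr ⟨n - 1, Finsupp.mem_support_iff.mpr h3, by omega⟩)
      · exact Finset.mem_union_right _
          (Finset.mem_image.mpr ⟨n + 1, Finsupp.mem_support_iff.mpr h1, by omega⟩))
  map_add' v w := by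
    ext n
    simp only [Finsupp.onFinset_apply, Finsupp.add_apply]
    split_ifs <;> ring
  map_smul' c v := by
    ext n
    simp only [Finsupp.onFinset_apply, Finsupp.smul_apply, smul_eq_mul, RingHom.id_apply]
    split_ifs <;> ring

/-- The grading operator `(N v)_n = n v_n` on finitely supported sequences. -/
def gradeN : Module.End ℂ (ℕ →₀ ℂ) where
  toFun v := Finsupp.onFinset v.support (fun n => (n : ℂ) * v n)
    (fun n hn => Finsupp.mem_support_iff.mpr (fun h => hn (by simp only [h, mul_zero])))
  map_add' v w := by
    ext n
    simp only [Finsupp.onFinset_apply, Finsupp.add_apply]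
    ring
  map_smul' c v := by
    ext n
    simp only [Finsupp.onFinset_apply, Finsupp.smul_apply, smul_eq_mul, RingHom.id_apply]
    ring

lemma jacobiA_apply (a : ℕ → ℝ) (v : ℕ →₀ ℂ) (n : ℕ) :
    jacobiA a v n = (a n : ℂ) * v (n + 1) +
      (if n = 0 then 0 else (a (n - 1) : ℂ) * v (n - 1)) := rfl

lemma gradeN_apply (v : ℕ →₀ ℂ) (n : ℕ) : gradeN v n = (n : ℂ) * v n := rfl

lemma lhs_apply (a : ℕ → ℝ) (v : ℕ →₀ ℂ) (n : ℕ) :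
    (jacobiA a * (jacobiA a * gradeN - gradeN * jacobiA a)
            - (jacobiA a * gradeN - gradeN * jacobiA a) * jacobiA a) v n
      = (2:ℂ) * ((if n = 0 then 0 else ((a (n-1) : ℂ))^2) - (a n : ℂ)^2) * v n := by
  simp only [LinearMap.sub_apply, Module.End.mul_apply, Finsupp.sub_apply,
    jacobiA_apply, gradeN_apply]
  match n with
  | 0 => simp; ring
  | 1 => simp; ring
  | (k+2) =>
    simp only [Nat.add_sub_cancel, if_neg (by omega : ¬ k + 2 = 0),
      if_neg (by omega : ¬ k + 3 = 0), if_neg (by omega : ¬ k + 1 = 0),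
      show k + 2 - 1 = k + 1 from rfl, show k + 1 - 1 = k from rfl,
      show k + 1 + 1 = k + 2 from rfl, show k + 2 + 1 = k + 3 from rfl]
    push_cast
    ring

/-- `[A,[A,N]] = -(4N+1)` holds if and only if
`a_n = (1/2)√((2n+1)(2n+2))` for all `n`. -/
theorem stmt13 (a : ℕ → ℝ) (ha : ∀ n, 0 < a n) :
    (∀ v : ℕ →₀ ℂ,
        (jacobiA a * (jacobiA a * gradeN - gradeN * jacobiA a)
            - (jacobiA a * gradeN - gradeN * jacobiA a) * jacobiA a) v
          = -((4 : ℂ) • gradeN v + v))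
    ↔ ∀ n : ℕ, a n = (1 / 2) * Real.sqrt ((2 * (n : ℝ) + 1) * (2 * (n : ℝ) + 2)) := by
  constructor
  · intro h
    -- extract the pointwise identity
    have key : ∀ n : ℕ, (2:ℝ) * ((if n = 0 then 0 else (a (n-1))^2) - (a n)^2)
        = -(4 * (n:ℝ) + 1) := by
      intro n
      have h1 := DFunLike.congr_fun (h (Finsupp.single n 1)) n
      rw [lhs_apply] at h1
      simp only [Finsupp.neg_apply, Finsupp.add_apply, Finsupp.smul_apply,
        gradeN_apply, Finsupp.single_eq_same, smul_eq_mul, mul_one] at h1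
      have h2 : ((2:ℝ) * ((if n = 0 then 0 else (a (n-1))^2) - (a n)^2) : ℂ)
          = ((-(4 * (n:ℝ) + 1) : ℝ) : ℂ) := by
        by_cases hn : n = 0
        · rw [if_pos hn] at h1 ⊢
          push_cast
          linear_combination h1
        · rw [if_neg hn] at h1 ⊢
          push_cast
          linear_combination h1
      exact_mod_cast h2
    have hsq : ∀ n : ℕ, (a n)^2 = (2 * (n:ℝ) + 1) * (2 * (n:ℝ) + 2) / 4 := by
      intro n
      induction n with
      | zero =>
        have := key 0
        simp at this
        push_cast
        linarith
      | succ k ih =>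
        have := key (k + 1)
        rw [if_neg (by omega), Nat.add_sub_cancel] at this
        push_cast at this ⊢
        nlinarith [this, ih]
    intro n
    have hnn : (0:ℝ) ≤ (2 * (n:ℝ) + 1) * (2 * (n:ℝ) + 2) := by positivity
    have h2 : ((1/2) * Real.sqrt ((2 * (n:ℝ) + 1) * (2 * (n:ℝ) + 2)))^2 = (a n)^2 := by
      rw [mul_pow, Real.sq_sqrt hnn, hsq n]; ring
    have h3 : 0 ≤ (1/2) * Real.sqrt ((2 * (n:ℝ) + 1) * (2 * (n:ℝ) + 2)) := by positivity
    nlinarith [ha n, h2, h3]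
  · intro h v
    have hsq : ∀ n : ℕ, ((a n : ℂ))^2 = (2 * (n:ℂ) + 1) * (2 * (n:ℂ) + 2) / 4 := by
      intro n
      have : (a n)^2 = (2 * (n:ℝ) + 1) * (2 * (n:ℝ) + 2) / 4 := by
        rw [h n, mul_pow, Real.sq_sqrt (by positivity)]; ring
      calc ((a n : ℂ))^2 = (((a n)^2 : ℝ) : ℂ) := by push_cast; ring
        _ = _ := by rw [this]; push_cast; ring
    ext n
    rw [lhs_apply]
    simp only [Finsupp.neg_apply, Finsupp.add_apply, Finsupp.smul_apply,
      gradeN_apply, smul_eq_mul]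
    match n with
    | 0 => simp [hsq 0]; ring
    | (k+1) =>
      rw [if_neg (by omega), Nat.add_sub_cancel, hsq, hsq]
      push_cast
      ring

end
end

section
/- Let P be a finite set of prime numbers and let M ⊆ ℕ be the set of positive integers all of whose prime factors belong to P (with 1 ∈ M). Let f : ℝ → ℂ be a Schwartz function. Then for every real s the sum and the integrals below converge absolutely, and ∫₀^∞ ( ∑_{m ∈ M} f(m u) ) u^{1/2 - i s} (du/u) = ( ∏_{p ∈ P} (1 - p^{-(1/2 - i s)})^{-1} ) · ∫₀^∞ f(u) u^{1/2 - i s} (du/u). -/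
/-!
Dilating by `m` multiplies the Mellin transform at `z` by `m ^ (-z)`, so the Mellin transform of
`u ↦ ∑_{m ∈ M} f (m u)` is `∑_{m ∈ M} m ^ (-z)` times that of `f`, and for `Re z > 0` this
Dirichlet series over the `P`-factored numbers is the finite Euler product over `P`. The rapid
decay of `f` gives
`∑_m ∫ |u ^ (z - 1) f (m u)| du = ∑_m m ^ (-Re z) ∫ |u ^ (z - 1) f u| du < ∞`,
which justifies exchanging sum and integral.
-/

open MeasureTheory Complex

open Set Filter Asymptotics

namespace MeasureTheory

variable {α E : Type*} [MeasurableSpace α] {μ : Measure α} [NormedAddCommGroup E]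
  [CompleteSpace E]

theorem integrable_tsum_of_summable_integral_norm {ι : Type*} [Countable ι] {F : ι → α → E}
    (hF_int : ∀ i, Integrable (F i) μ) (hF_sum : Summable fun i ↦ ∫ a, ‖F i a‖ ∂μ) :
    Integrable (fun a ↦ ∑' i, F i a) μ := by
  have hF_enorm (i : ι) : AEMeasurable (fun a ↦ ‖F i a‖ₑ) μ := (hF_int i).1.enorm
  have hfin : ∫⁻ a, ∑' i, ‖F i a‖ₑ ∂μ < ⊤ := by
    simp_rw [lintegral_tsum hF_enorm, ← ofReal_integral_norm_eq_lintegral_enorm (hF_int _),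
      ← ENNReal.ofReal_tsum_of_nonneg (fun i ↦ integral_nonneg fun a ↦ norm_nonneg _) hF_sum]
    exact ENNReal.ofReal_lt_top
  have hsummable : ∀ᵐ a ∂μ, Summable fun i ↦ F i a := by
    filter_upwards [ae_lt_top' (AEMeasurable.tsum hF_enorm) hfin.ne] with a ha
    exact Summable.of_nnnorm (ENNReal.tsum_coe_ne_top_iff_summable.1 ha.ne)
  refine ⟨aestronglyMeasurable_of_tendsto_ae atTop
    (fun s ↦ Finset.aestronglyMeasurable_sum s fun i _ ↦ (hF_int i).1) ?_, ?_⟩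
  · filter_upwards [hsummable] with a ha
    simpa only [HasSum, SummationFilter.unconditional_filter, Finset.sum_apply] using ha.hasSum
  · exact (lintegral_mono fun a ↦ enorm_tsum_le_tsum_enorm).trans_lt hfin

end MeasureTheory

section Mellin

variable {E : Type*} [NormedAddCommGroup E] [NormedSpace ℂ E]

lemma norm_ofReal_cpow_smul_of_pos (f : ℝ → E) (z : ℂ) {u : ℝ} (hu : 0 < u) :
    ‖(u : ℂ) ^ (z - 1) • f u‖ = u ^ (z.re - 1) * ‖f u‖ := by
  rw [norm_smul, norm_cpow_eq_rpow_re_of_pos hu, sub_re, one_re]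

lemma integral_norm_mellin_integrand_comp_mul_left (f : ℝ → E) (z : ℂ) {c : ℝ}
    (hc : 0 < c) :
    ∫ u in Ioi (0 : ℝ), ‖(u : ℂ) ^ (z - 1) • f (c * u)‖ =
      c ^ (-z.re) * ∫ u in Ioi (0 : ℝ), ‖(u : ℂ) ^ (z - 1) • f u‖ := by
  have hscale : EqOn (fun u : ℝ ↦ ‖(u : ℂ) ^ (z - 1) • f (c * u)‖)
      (fun u ↦ c ^ (1 - z.re) * ((c * u) ^ (z.re - 1) * ‖f (c * u)‖)) (Ioi 0) := by
    intro u (hu : 0 < u)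
    dsimp only
    rw [norm_ofReal_cpow_smul_of_pos (fun u ↦ f (c * u)) z hu, Real.mul_rpow hc.le hu.le,
      ← mul_assoc, ← mul_assoc, ← Real.rpow_add hc, sub_add_sub_cancel', sub_self,
      Real.rpow_zero, one_mul]
  rw [setIntegral_congr_fun measurableSet_Ioi hscale, integral_const_mul,
    integral_comp_mul_left_Ioi (fun v ↦ v ^ (z.re - 1) * ‖f v‖) 0 hc, mul_zero, smul_eq_mul,
    ← mul_assoc, ← Real.rpow_neg_one, ← Real.rpow_add hc]
  congr 1
  · ring_nf
  · exact setIntegral_congr_fun measurableSet_Ioi fun u hu ↦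
      (norm_ofReal_cpow_smul_of_pos f z hu).symm

variable [CompleteSpace E]

theorem mellinConvergent_and_hasSum_mellin_tsum_comp_mul_left {ι : Type*} [Countable ι]
    {f : ℝ → E} {z : ℂ} {c : ι → ℝ} (hc : ∀ i, 0 < c i) (hf : MellinConvergent f z)
    (hsum : Summable fun i ↦ c i ^ (-z.re)) :
    MellinConvergent (fun u : ℝ ↦ ∑' i, f (c i * u)) z ∧
      HasSum (fun i ↦ (c i : ℂ) ^ (-z) • mellin f z)
        (mellin (fun u : ℝ ↦ ∑' i, f (c i * u)) z) := by
  set F : ι → ℝ → E := fun i (u : ℝ) ↦ (u : ℂ) ^ (z - 1) • f (c i * u)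
  have hF_int (i : ι) : IntegrableOn (F i) (Ioi 0) :=
    (MellinConvergent.comp_mul_left (hc i)).2 hf
  have hF_sum : Summable fun i ↦ ∫ u in Ioi (0 : ℝ), ‖F i u‖ := by
    simp_rw [F, integral_norm_mellin_integrand_comp_mul_left f z (hc _)]
    exact hsum.mul_right _
  have hF_tsum :
      (fun u ↦ ∑' i, F i u) = fun u : ℝ ↦ (u : ℂ) ^ (z - 1) • ∑' i, f (c i * u) := by
    funext u
    exact tsum_const_smul'' _
  refine ⟨?_, ?_⟩
  · have := integrable_tsum_of_summable_integral_norm hF_int hF_sum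
    rwa [hF_tsum] at this
  · have hF_integral (i : ι) :
        ∫ u in Ioi (0 : ℝ), F i u = (c i : ℂ) ^ (-z) • mellin f z :=
      mellin_comp_mul_left f z (hc i)
    have := hasSum_integral_of_summable_integral_norm hF_int hF_sum
    simp only [hF_integral, hF_tsum] at this
    exact this

end Mellin

namespace SchwartzMap

variable {E : Type*} [NormedAddCommGroup E] [NormedSpace ℝ E]

theorem isBigO_atTop_rpow (f : 𝓢(ℝ, E)) (s : ℝ) : f =O[atTop] (· ^ s) := by
  refine ((f.isBigO_cocompact_rpow s).mono atTop_le_cocompact).trans ?_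
  refine (isBigO_refl _ _).congr' (Eventually.of_forall fun _ ↦ rfl) ?_
  filter_upwards [eventually_ge_atTop 0] with x hx
  rw [Real.norm_of_nonneg hx]

theorem summable_norm_comp_natCast_mul (f : 𝓢(ℝ, E)) {u : ℝ} (hu : 0 < u) :
    Summable fun n : ℕ ↦ ‖f (n * u)‖ := by
  have hdecay : (fun n : ℕ ↦ f (n * u)) =O[atTop] fun n ↦ ((n : ℝ) * u) ^ (-2 : ℝ) :=
    (f.isBigO_atTop_rpow (-2)).comp_tendsto
      (tendsto_natCast_atTop_atTop.atTop_mul_const hu)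
  have hsum : Summable fun n : ℕ ↦ (n : ℝ) ^ (-2 : ℝ) * u ^ (-2 : ℝ) :=
    (Real.summable_nat_rpow.2 (by norm_num)).mul_right _
  refine summable_of_isBigO_nat' hsum ?_
  refine hdecay.norm_left.congr_right fun n ↦ ?_
  rw [Real.mul_rpow n.cast_nonneg hu.le]

variable [NormedSpace ℂ E]

theorem mellinConvergent (f : 𝓢(ℝ, E)) {z : ℂ} (hz : 0 < z.re) : MellinConvergent f z := by
  refine mellinConvergent_of_isBigO_rpow (f.continuous.locallyIntegrable.locallyIntegrableOn _)
    (f.isBigO_atTop_rpow _) (lt_add_one z.re) (b := 0) ?_ hz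
  simpa only [neg_zero, Real.rpow_zero] using
    ((f.continuous.tendsto 0).isBigO_one ℝ).mono nhdsWithin_le_nhds

end SchwartzMap

lemma eqOn_cpow_sub_one_smul_mul_cpow_div (g : ℝ → ℂ) (z : ℂ) :
    EqOn (fun u : ℝ ↦ (u : ℂ) ^ (z - 1) • g u) (fun u : ℝ ↦ g u * (u : ℂ) ^ z / u)
      (Ioi 0) := by
  intro u (hu : 0 < u)
  dsimp only
  rw [smul_eq_mul, cpow_sub _ _ (ofReal_ne_zero.2 hu.ne'), cpow_one, div_mul_eq_mul_div, mul_comm]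

lemma mellin_eq_integral_mul_cpow_div (g : ℝ → ℂ) (z : ℂ) :
    mellin g z = ∫ u in Ioi (0 : ℝ), g u * (u : ℂ) ^ z / u :=
  setIntegral_congr_fun measurableSet_Ioi (eqOn_cpow_sub_one_smul_mul_cpow_div g z)

lemma mellinConvergent_iff_integrableOn_mul_cpow_div (g : ℝ → ℂ) (z : ℂ) :
    MellinConvergent g z ↔ IntegrableOn (fun u : ℝ ↦ g u * (u : ℂ) ^ z / u) (Ioi 0) :=
  integrableOn_congr_fun (eqOn_cpow_sub_one_smul_mul_cpow_div g z) measurableSet_Ioi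

lemma summable_and_hasSum_factoredNumbers_cpow_neg (P : Finset ℕ) {z : ℂ} (hz : 0 < z.re) :
    Summable (fun m : Nat.factoredNumbers P ↦ ‖((m : ℕ) : ℂ) ^ (-z)‖) ∧
      HasSum (fun m : Nat.factoredNumbers P ↦ ((m : ℕ) : ℂ) ^ (-z))
        (∏ p ∈ P with p.Prime, (1 - (p : ℂ) ^ (-z))⁻¹) :=
  EulerProduct.summable_and_hasSum_factoredNumbers_prod_filter_prime_geometric
    (f := (riemannZetaSummandHom (ne_zero_of_re_pos hz) : ℕ →* ℂ)) (fun hp ↦ by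
      change ‖(_ : ℂ) ^ (-z)‖ < 1
      rw [norm_natCast_cpow_of_pos hp.pos, neg_re]
      exact Real.rpow_lt_one_of_one_lt_of_neg (Nat.one_lt_cast.2 hp.one_lt)
        (neg_neg_of_pos hz)) P

lemma Nat.setOf_pos_and_prime_dvd_mem_eq_factoredNumbers (P : Finset ℕ) :
    {m : ℕ | 0 < m ∧ ∀ q : ℕ, q.Prime → q ∣ m → q ∈ P} = Nat.factoredNumbers P := by
  ext m
  rw [Nat.mem_factoredNumbers']
  exact ⟨And.right, fun h ↦ ⟨Nat.pos_of_ne_zero (Nat.ne_zero_of_mem_factoredNumbers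
    (Nat.mem_factoredNumbers'.2 h)), h⟩⟩

/-- semilocal Euler product identity for the Mellin transform of a
Schwartz function summed over the multiplicative monoid generated by a finite set of
primes. -/
theorem stmt15 (P : Finset ℕ) (hP : ∀ p ∈ P, Nat.Prime p)
    (M : Set ℕ) (hM : M = {m : ℕ | 0 < m ∧ ∀ q : ℕ, Nat.Prime q → q ∣ m → q ∈ P})
    (f : SchwartzMap ℝ ℂ) (s : ℝ) :
    (∀ u : ℝ, 0 < u → Summable fun m : M => ‖f ((m : ℕ) * u)‖)
    ∧ IntegrableOn
        (fun u : ℝ => (∑' m : M, f ((m : ℕ) * u)) *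
          (u : ℂ) ^ ((1 : ℂ) / 2 - Complex.I * (s : ℂ)) / (u : ℂ))
        (Set.Ioi (0 : ℝ))
    ∧ IntegrableOn
        (fun u : ℝ => f u * (u : ℂ) ^ ((1 : ℂ) / 2 - Complex.I * (s : ℂ)) / (u : ℂ))
        (Set.Ioi (0 : ℝ))
    ∧ (∫ u in Set.Ioi (0 : ℝ),
          (∑' m : M, f ((m : ℕ) * u)) *
            (u : ℂ) ^ ((1 : ℂ) / 2 - Complex.I * (s : ℂ)) / (u : ℂ))
        = (∏ p ∈ P, (1 - (p : ℂ) ^ (-((1 : ℂ) / 2 - Complex.I * (s : ℂ))))⁻¹) *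
            ∫ u in Set.Ioi (0 : ℝ),
              f u * (u : ℂ) ^ ((1 : ℂ) / 2 - Complex.I * (s : ℂ)) / (u : ℂ) := by
  rw [hM, Nat.setOf_pos_and_prime_dvd_mem_eq_factoredNumbers]
  set z : ℂ := 1 / 2 - I * s
  have hz : 0 < z.re := by simp [z]
  obtain ⟨hnorm, heuler⟩ := summable_and_hasSum_factoredNumbers_cpow_neg P hz
  rw [Finset.filter_true_of_mem hP] at heuler
  have hpos (m : Nat.factoredNumbers P) : 0 < (m : ℕ) := Nat.pos_of_ne_zero m.2.1
  have hsum : Summable fun m : Nat.factoredNumbers P ↦ ((m : ℕ) : ℝ) ^ (-z.re) := by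
    simpa only [norm_natCast_cpow_of_pos (hpos _), neg_re] using hnorm
  obtain ⟨hconv, hmellin⟩ := mellinConvergent_and_hasSum_mellin_tsum_comp_mul_left
    (fun m ↦ Nat.cast_pos.2 (hpos m)) (f.mellinConvergent hz) hsum
  simp only [ofReal_natCast] at hmellin
  refine ⟨fun u hu ↦ (f.summable_norm_comp_natCast_mul hu).subtype _,
    (mellinConvergent_iff_integrableOn_mul_cpow_div _ z).1 hconv,
    (mellinConvergent_iff_integrableOn_mul_cpow_div _ z).1 (f.mellinConvergent hz), ?_⟩
  rw [← mellin_eq_integral_mul_cpow_div, ← mellin_eq_integral_mul_cpow_div, ← smul_eq_mul]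
  exact hmellin.unique (heuler.smul_const _)
end

section
/- For every Schwartz function f : ℝ → ℂ and every real s, ∫₀^∞ ( v f'(v) + (1/2) f(v) ) v^{1/2 - i s} (dv/v) = i s · ∫₀^∞ f(v) v^{1/2 - i s} (dv/v). (Thus the Mellin-type transform 𝒰(f)(s) = π^{-1/2} ∫₀^∞ f(v) v^{1/2 - i s} dv/v conjugates the operator H + 1/2, with H = x ∂_x, into multiplication by i s, i.e. it gives the canonical form of the scaling operator 𝕊 = -i(H + 1/2).) -/
open MeasureTheory Complex
open Filter Asymptotics Set Topology

/-! Integration by parts against `t ^ w` gives `𝓜(t f')(w) = -w 𝓜f(w)` for the Mellin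
transform `𝓜` and `0 < re w`, the boundary terms vanishing because `f` is bounded near `0`
and rapidly decreasing at `∞`. Hence `𝓜((H + 1/2) f)(w) = (1/2 - w) 𝓜f(w)`, which is
`i s 𝓜f(w)` at `w = 1/2 - i s`; the integrals of the statement are `𝓜(·)(w)` written
against `dv / v`. -/

namespace SchwartzMap

variable {E : Type*} [NormedAddCommGroup E] [NormedSpace ℂ E]

theorem mellinConvergent_s19 (f : 𝓢(ℝ, E)) {s : ℂ} (hs : 0 < s.re) : MellinConvergent f s := by
  refine mellinConvergent_of_isBigO_rpow (a := s.re + 1) (b := 0)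
    (f.continuous.locallyIntegrable.locallyIntegrableOn _) ?_ (by linarith) ?_ hs
  · refine ((f.isBigO_cocompact_rpow (-(s.re + 1))).mono atTop_le_cocompact).congr' .rfl ?_
    filter_upwards [eventually_ge_atTop 0] with x hx
    rw [Real.norm_of_nonneg hx]
  · refine IsBigO.of_bound (SchwartzMap.seminorm ℝ 0 0 f) (Eventually.of_forall fun x => ?_)
    simpa using f.norm_le_seminorm ℝ x

theorem mellinConvergent_ofReal_smul_deriv (f : 𝓢(ℝ, E)) {s : ℂ} (hs : 0 < s.re) :
    MellinConvergent (fun t : ℝ => (t : ℂ) • deriv f t) s := by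
  simpa only [cpow_one, derivCLM_apply] using MellinConvergent.cpow_smul.2 <|
    (derivCLM ℝ E f).mellinConvergent_s19 (s := s + 1) (by simp; linarith)

theorem hasDerivAt_ofReal_cpow_smul (f : 𝓢(ℝ, E)) (s : ℂ) {x : ℝ} (hx : 0 < x) :
    HasDerivAt (fun t : ℝ => (t : ℂ) ^ s • f t)
      ((x : ℂ) ^ s • deriv f x + (s * (x : ℂ) ^ (s - 1)) • f x) x := by
  have hpow : HasDerivAt (fun t : ℝ => (t : ℂ) ^ s) (s * (x : ℂ) ^ (s - 1)) x :=
    (hasStrictDerivAt_cpow_const (ofReal_mem_slitPlane.2 hx)).hasDerivAt.comp_ofReal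
  exact hpow.smul (f.hasDerivAt x)

variable [CompleteSpace E]

theorem mellin_ofReal_smul_deriv (f : 𝓢(ℝ, E)) {s : ℂ} (hs : 0 < s.re) :
    mellin (fun t : ℝ => (t : ℂ) • deriv f t) s = -s • mellin f s := by
  have hderiv := fun x (hx : x ∈ Ioi (0 : ℝ)) => f.hasDerivAt_ofReal_cpow_smul s hx
  have hf' : IntegrableOn (fun t : ℝ => (t : ℂ) ^ s • deriv f t) (Ioi 0) := by
    simpa only [MellinConvergent, add_sub_cancel_right, derivCLM_apply] using
      (derivCLM ℝ E f).mellinConvergent_s19 (s := s + 1) (by simp; linarith)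
  have hf : IntegrableOn (fun t : ℝ => (s * (t : ℂ) ^ (s - 1)) • f t) (Ioi 0) := by
    simpa only [IntegrableOn, mul_smul, Pi.smul_def] using (f.mellinConvergent_s19 hs).smul s
  have hlim : Tendsto (fun t : ℝ => (t : ℂ) ^ s • f t) atTop (𝓝 0) :=
    tendsto_zero_of_hasDerivAt_of_integrableOn_Ioi hderiv (hf'.add hf) <| by
      simpa only [MellinConvergent, add_sub_cancel_right] using
        f.mellinConvergent_s19 (s := s + 1) (by simp; linarith)
  have hcont : ContinuousWithinAt (fun t : ℝ => (t : ℂ) ^ s • f t) (Ici 0) 0 :=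
    ((continuousAt_ofReal_cpow_const 0 s (.inl hs)).smul
      f.continuous.continuousAt).continuousWithinAt
  have hftc := integral_Ioi_of_hasDerivAt_of_tendsto hcont hderiv (hf'.add hf) hlim
  have hs0 : s ≠ 0 := fun h => by simp [h] at hs
  have hmellin : mellin (fun t : ℝ => (t : ℂ) • deriv f t) s =
      ∫ t in Ioi (0 : ℝ), (t : ℂ) ^ s • deriv f t := by
    simpa only [cpow_one, mellin, add_sub_cancel_right] using mellin_cpow_smul (deriv f) s 1
  rw [integral_add hf' hf, ← hmellin] at hftc
  simp only [mul_smul, integral_smul, ofReal_zero, zero_cpow hs0, zero_smul, sub_zero] at hftc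
  rw [neg_smul]
  exact eq_neg_of_add_eq_zero_left hftc

end SchwartzMap

theorem mellin_eq_setIntegral_mul_cpow_div (g : ℝ → ℂ) (s : ℂ) :
    mellin g s = ∫ t in Ioi (0 : ℝ), g t * (t : ℂ) ^ s / t := by
  refine setIntegral_congr_fun measurableSet_Ioi fun t ht => ?_
  rw [cpow_sub _ _ (ofReal_ne_zero.2 (ne_of_gt ht)), cpow_one, smul_eq_mul]
  ring

/-- the Mellin-type transform `𝒰` conjugates `H + 1/2` (with `H = x∂ₓ`)
into multiplication by `is`. -/
theorem stmt19 (f : SchwartzMap ℝ ℂ) (s : ℝ) :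
    (∫ v in Set.Ioi (0 : ℝ),
        ((v : ℂ) * deriv f v + (1 / 2 : ℂ) * f v) *
          (v : ℂ) ^ ((1 : ℂ) / 2 - Complex.I * (s : ℂ)) / (v : ℂ))
      = Complex.I * (s : ℂ) *
          ∫ v in Set.Ioi (0 : ℝ),
            f v * (v : ℂ) ^ ((1 : ℂ) / 2 - Complex.I * (s : ℂ)) / (v : ℂ) := by
  set z : ℂ := 1 / 2 - I * s
  have hz : 0 < z.re := by simp [z]
  have hsplit := (hasMellin_add (f.mellinConvergent_ofReal_smul_deriv hz)
    ((f.mellinConvergent_s19 hz).const_smul (1 / 2 : ℂ))).2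
  rw [f.mellin_ofReal_smul_deriv hz, mellin_const_smul] at hsplit
  simp only [smul_eq_mul] at hsplit
  rw [← mellin_eq_setIntegral_mul_cpow_div, ← mellin_eq_setIntegral_mul_cpow_div, hsplit]
  ring
end
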